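/- arXiv:1712.01497 — 2 statements merged into one kernel-verified Lean document; each statement's English description precedes it below -/
import Mathlib

section
/- Let N_x, N_y be positive integers and N = N_x N_y. Suppose r ∈ ℂᴺ admits the decomposition r = Σ_{k=1}^K p_k b(α_k,β_k) with all p_k > 0. Set t = √N · Σ_k p_k and T = (1/√N) · Σ_k p_k b(α_k,β_k) b(α_k,β_k)ᴴ. Then: (i) T is two-level Toeplitz; (ii) the (1+N)×(1+N) block matrix [[t, rᴴ],[r, T]] is Hermitian positive semidefinite; and (iii) (t + tr T)/(2√N) = Σ_{k=1}^K p_k. -/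
open Matrix ComplexOrder

/-- The 2-D DOA atom `b(α,β) ∈ ℂ^{N_x N_y}`, indexed by pairs `(m,n)`, with entries
`[b(α,β)]_{(m,n)} = exp(−iπ m cos α) · exp(iπ n cos β)`. -/
noncomputable def atom (Nx Ny : ℕ) (α β : ℝ) : Fin Nx × Fin Ny → ℂ := fun i =>
  Complex.exp (-((Real.pi * ((i.1 : ℕ) : ℝ) * Real.cos α : ℝ) : ℂ) * Complex.I) *
  Complex.exp (((Real.pi * ((i.2 : ℕ) : ℝ) * Real.cos β : ℝ) : ℂ) * Complex.I)

/-- A matrix indexed by pairs is two-level Toeplitz if its entries depend on the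
indices only through the differences `(m − m', n − n')`. -/
def IsTwoLevelToeplitz {Nx Ny : ℕ}
    (T : Matrix (Fin Nx × Fin Ny) (Fin Nx × Fin Ny) ℂ) : Prop :=
  ∀ i j i' j' : Fin Nx × Fin Ny,
    ((i.1 : ℤ) - (j.1 : ℤ) = (i'.1 : ℤ) - (j'.1 : ℤ)) →
    ((i.2 : ℤ) - (j.2 : ℤ) = (i'.2 : ℤ) - (j'.2 : ℤ)) →
    T i j = T i' j'

/-- The `(1+N)×(1+N)` block matrix `[[t, rᴴ],[r, T]]`. -/
def blockMat {Nx Ny : ℕ} (t : ℝ) (r : Fin Nx × Fin Ny → ℂ)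
    (T : Matrix (Fin Nx × Fin Ny) (Fin Nx × Fin Ny) ℂ) :
    Matrix (Unit ⊕ (Fin Nx × Fin Ny)) (Unit ⊕ (Fin Nx × Fin Ny)) ℂ :=
  Matrix.fromBlocks (Matrix.of fun _ _ => (t : ℂ)) (Matrix.of fun _ j => star (r j))
    (Matrix.of fun i _ => r i) T


private lemma atom_mul_conj {Nx Ny : ℕ} (α β : ℝ) (i j : Fin Nx × Fin Ny) :
    atom Nx Ny α β i * star (atom Nx Ny α β j) =
      Complex.exp (((((j.1 : ℤ) - (i.1 : ℤ) : ℤ) : ℂ) * (Real.pi * Real.cos α) +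
        (((i.2 : ℤ) - (j.2 : ℤ) : ℤ) : ℂ) * (Real.pi * Real.cos β)) * Complex.I) := by
  have hc : ∀ z : ℂ, star (Complex.exp z) = Complex.exp (star z) := fun z =>
    (Complex.exp_conj z).symm
  simp only [atom, star_mul', hc, Complex.star_def, map_add, map_neg, _root_.map_mul,
    Complex.conj_ofReal, Complex.conj_I, ← Complex.exp_add]
  congr 1
  push_cast
  ring

private lemma psd_vecMulVec {n : Type*} [Fintype n] (v : n → ℂ) :
    (Matrix.vecMulVec v (star v)).PosSemidef := by
  refine Matrix.PosSemidef.of_dotProduct_mulVec_nonneg ?_ ?_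
  · ext i j
    simp [conjTranspose_apply, vecMulVec_apply, mul_comm]
  · intro x
    have h : star x ⬝ᵥ (Matrix.vecMulVec v (star v) *ᵥ x) =
        (star x ⬝ᵥ v) * star (star x ⬝ᵥ v) := by
      have hst : star (star x ⬝ᵥ v) = star v ⬝ᵥ x := by
        simp only [dotProduct, star_sum, star_mul', star_star, Pi.star_apply]
        exact Finset.sum_congr rfl fun i _ => mul_comm _ _
      rw [hst]
      simp only [dotProduct, mulVec, vecMulVec_apply, Finset.sum_mul, Finset.mul_sum]
      rw [Finset.sum_comm]
      exact Finset.sum_congr rfl fun i _ => Finset.sum_congr rfl fun j _ => by ring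
    rw [h]
    exact mul_star_self_nonneg _

private lemma psd_smul' {n : Type*} [Fintype n] {M : Matrix n n ℂ} (hM : M.PosSemidef)
    {c : ℝ} (hc : 0 ≤ c) : (((c : ℝ) : ℂ) • M).PosSemidef := by
  refine Matrix.PosSemidef.of_dotProduct_mulVec_nonneg ?_ ?_
  · rw [Matrix.IsHermitian, conjTranspose_smul, hM.1]
    congr 1
    simp [Complex.star_def, Complex.conj_ofReal]
  · intro x
    rw [smul_mulVec, dotProduct_smul, smul_eq_mul]
    exact mul_nonneg (by exact_mod_cast hc) (hM.dotProduct_mulVec_nonneg x)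

private lemma psd_sum {n ι : Type*} [Fintype n] (s : Finset ι) (f : ι → Matrix n n ℂ)
    (h : ∀ i ∈ s, (f i).PosSemidef) : (∑ i ∈ s, f i).PosSemidef :=
  Finset.sum_induction f _ (fun _ _ ha hb => ha.add hb) Matrix.PosSemidef.zero h

/-- if `r = ∑ₖ pₖ b(αₖ,βₖ)` with all `pₖ > 0`, then setting
`t = √N ∑ₖ pₖ` and `T = (1/√N) ∑ₖ pₖ b(αₖ,βₖ) b(αₖ,βₖ)ᴴ` (with `N = N_x N_y`):
(i) `T` is two-level Toeplitz; (ii) the block matrix `[[t, rᴴ],[r, T]]` is Hermitian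
positive semidefinite; (iii) `(t + tr T)/(2√N) = ∑ₖ pₖ`. -/
theorem stmt8 (Nx Ny K : ℕ) (hNx : 0 < Nx) (hNy : 0 < Ny)
    (p : Fin K → ℝ) (hp : ∀ k, 0 < p k) (α β : Fin K → ℝ)
    (r : Fin Nx × Fin Ny → ℂ)
    (hr : r = ∑ k, (p k : ℂ) • atom Nx Ny (α k) (β k)) :
    IsTwoLevelToeplitz
      (((1 / Real.sqrt (Nx * Ny) : ℝ) : ℂ) • ∑ k, (p k : ℂ) •
        Matrix.vecMulVec (atom Nx Ny (α k) (β k)) (star (atom Nx Ny (α k) (β k)))) ∧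
    (blockMat (Real.sqrt (Nx * Ny) * ∑ k, p k) r
      (((1 / Real.sqrt (Nx * Ny) : ℝ) : ℂ) • ∑ k, (p k : ℂ) •
        Matrix.vecMulVec (atom Nx Ny (α k) (β k))
          (star (atom Nx Ny (α k) (β k))))).PosSemidef ∧
    (((Real.sqrt (Nx * Ny) * ∑ k, p k : ℝ) : ℂ) +
        Matrix.trace (((1 / Real.sqrt (Nx * Ny) : ℝ) : ℂ) • ∑ k, (p k : ℂ) •
          Matrix.vecMulVec (atom Nx Ny (α k) (β k))
            (star (atom Nx Ny (α k) (β k)))))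
        / ((2 * Real.sqrt (Nx * Ny) : ℝ) : ℂ)
      = ∑ k, (p k : ℂ) := by
  set s := Real.sqrt (Nx * Ny) with hsdef
  have hNpos : (0 : ℝ) < (Nx : ℝ) * (Ny : ℝ) := by positivity
  have hs0 : 0 < s := Real.sqrt_pos.mpr hNpos
  have hsC : (s : ℂ) ≠ 0 := by exact_mod_cast hs0.ne'
  set b : Fin K → Fin Nx × Fin Ny → ℂ := fun k => atom Nx Ny (α k) (β k) with hb
  refine ⟨?_, ?_, ?_⟩
  · intro i j i' j' h1 h2
    simp only [Matrix.smul_apply, Matrix.sum_apply, Matrix.vecMulVec_apply,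
      Pi.star_apply, smul_eq_mul]
    congr 1
    refine Finset.sum_congr rfl fun k _ => ?_
    congr 1
    have e1 : (j.1 : ℤ) - (i.1 : ℤ) = (j'.1 : ℤ) - (i'.1 : ℤ) := by omega
    have e2 : (i.2 : ℤ) - (j.2 : ℤ) = (i'.2 : ℤ) - (j'.2 : ℤ) := by omega
    rw [atom_mul_conj, atom_mul_conj, e1, e2]
  · set v : Fin K → (Unit ⊕ (Fin Nx × Fin Ny)) → ℂ :=
      fun k => Sum.elim (fun _ => (s : ℂ)) (b k) with hv
    have hdecomp : blockMat (s * ∑ k, p k) r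
        (((1 / s : ℝ) : ℂ) • ∑ k, (p k : ℂ) • Matrix.vecMulVec (b k) (star (b k)))
        = ∑ k, ((p k / s : ℝ) : ℂ) • Matrix.vecMulVec (v k) (star (v k)) := by
      ext i j
      cases i <;> cases j <;>
        simp only [blockMat, Matrix.fromBlocks_apply₁₁, Matrix.fromBlocks_apply₁₂,
          Matrix.fromBlocks_apply₂₁, Matrix.fromBlocks_apply₂₂, Matrix.of_apply,
          Finset.sum_apply, Matrix.sum_apply, Matrix.smul_apply, Matrix.vecMulVec_apply,
          Pi.star_apply, Sum.elim_inl, Sum.elim_inr, hr, Pi.smul_apply, smul_eq_mul,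
          Complex.star_def, Complex.conj_ofReal, star_sum, map_sum, _root_.map_mul,
          Complex.ofReal_div, Complex.ofReal_mul, Complex.ofReal_sum]
      · rw [Finset.mul_sum]
        exact Finset.sum_congr rfl fun k _ => by
          simp only [hv, Sum.elim_inl, Sum.elim_inr, Complex.conj_ofReal]; field_simp; try ring
      · exact Finset.sum_congr rfl fun k _ => by
          simp only [hv, Sum.elim_inl, Sum.elim_inr, Complex.conj_ofReal]; field_simp; try ring
      · exact Finset.sum_congr rfl fun k _ => by
          simp only [hv, Sum.elim_inl, Sum.elim_inr, Complex.conj_ofReal]; field_simp; try ring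
      · rw [Finset.mul_sum]
        exact Finset.sum_congr rfl fun k _ => by
          simp only [hv, Sum.elim_inl, Sum.elim_inr, Complex.conj_ofReal, Complex.ofReal_one]; field_simp; try ring
    rw [hdecomp]
    exact psd_sum _ _ fun k _ => psd_smul' (psd_vecMulVec (v k))
      (div_nonneg (hp k).le hs0.le)
  · have htr1 : ∀ k, Matrix.trace (Matrix.vecMulVec (b k) (star (b k)))
        = ((Nx * Ny : ℕ) : ℂ) := by
      intro k
      have h1 : ∀ i : Fin Nx × Fin Ny, b k i * star (b k i) = 1 := fun i => by
        rw [hb]; rw [atom_mul_conj]; simp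
      simp only [Matrix.trace, Matrix.diag, Matrix.vecMulVec_apply, Pi.star_apply, h1]
      simp [Finset.card_univ]
    have hN : (s : ℂ) * s = ((Nx * Ny : ℕ) : ℂ) := by
      have := Real.mul_self_sqrt hNpos.le
      rw [hsdef]
      push_cast
      exact_mod_cast congrArg (Complex.ofReal) this
    have htr1' : ∀ k, Matrix.trace (Matrix.vecMulVec (atom Nx Ny (α k) (β k))
        (star (atom Nx Ny (α k) (β k)))) = ((Nx * Ny : ℕ) : ℂ) := htr1
    rw [Matrix.trace_smul, Matrix.trace_sum]
    simp only [Matrix.trace_smul, htr1', smul_eq_mul]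
    rw [← Finset.sum_mul]
    push_cast at hN ⊢
    rw [← hN]
    field_simp
    ring
end

section
/- Let N_x, N_y be positive integers, N = N_x N_y, and r ∈ ℂᴺ. Then V(r) ≤ ‖r‖_A, where ‖r‖_A is the atomic norm of r over the set of 2-D DOA atoms and V(r) is the optimal value of the associated semidefinite program. -/
open Matrix ComplexOrder ENNReal

/-- The atomic norm `‖r‖_A = inf {∑ₖ pₖ : pₖ > 0, r = ∑ₖ pₖ b(αₖ,βₖ)}`, valued in
`ℝ≥0∞` (infimum over the empty set being `+∞`). -/
noncomputable def atomicNorm (Nx Ny : ℕ) (r : Fin Nx × Fin Ny → ℂ) : ℝ≥0∞ :=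
  ⨅ (K : ℕ) (p : Fin K → ℝ) (α : Fin K → ℝ) (β : Fin K → ℝ)
    (_ : ∀ k, 0 < p k) (_ : r = ∑ k, (p k : ℂ) • atom Nx Ny (α k) (β k)),
    ENNReal.ofReal (∑ k, p k)

/-- The SDP value
`V(r) = inf {(t + tr T)/(2√(N_x N_y)) : T two-level Toeplitz, [[t, rᴴ],[r, T]] ⪰ 0}`. -/
noncomputable def sdpValue (Nx Ny : ℕ) (r : Fin Nx × Fin Ny → ℂ) : ℝ≥0∞ :=
  ⨅ (t : ℝ) (T : Matrix (Fin Nx × Fin Ny) (Fin Nx × Fin Ny) ℂ)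
    (_ : IsTwoLevelToeplitz T) (_ : (blockMat t r T).PosSemidef),
    ENNReal.ofReal ((t + (Matrix.trace T).re) / (2 * Real.sqrt (Nx * Ny)))


lemma atom_mul_star (Nx Ny : ℕ) (α β : ℝ) (i j : Fin Nx × Fin Ny) :
    atom Nx Ny α β i * star (atom Nx Ny α β j) =
      Complex.exp (((Real.pi * Real.cos α * (((j.1 : ℕ) : ℝ) - ((i.1 : ℕ) : ℝ)) +
        Real.pi * Real.cos β * (((i.2 : ℕ) : ℝ) - ((j.2 : ℕ) : ℝ))) : ℝ) * Complex.I) := by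
  simp only [atom, star_mul', Complex.star_def, ← Complex.exp_conj, _root_.map_mul, map_neg,
    Complex.conj_I, Complex.conj_ofReal]
  rw [mul_mul_mul_comm, ← Complex.exp_add, ← Complex.exp_add, ← Complex.exp_add]
  congr 1
  push_cast
  ring

/-- `V(r) ≤ ‖r‖_A`. -/
theorem stmt9 (Nx Ny : ℕ) (hNx : 0 < Nx) (hNy : 0 < Ny)
    (r : Fin Nx × Fin Ny → ℂ) :
    sdpValue Nx Ny r ≤ atomicNorm Nx Ny r := by
  rw [atomicNorm]
  refine le_iInf fun K => le_iInf fun p => le_iInf fun α => le_iInf fun β =>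
    le_iInf fun hp => le_iInf fun hr => ?_
  have hN : (0:ℝ) < (Nx : ℝ) * Ny := by positivity
  set s : ℝ := Real.sqrt ((Nx : ℝ) * Ny) with hs_def
  have hs : 0 < s := Real.sqrt_pos.2 hN
  have hss : s * s = (Nx : ℝ) * Ny := Real.mul_self_sqrt hN.le
  set t : ℝ := s * ∑ k, p k with ht_def
  set T : Matrix (Fin Nx × Fin Ny) (Fin Nx × Fin Ny) ℂ :=
    ∑ k, ((p k / s : ℝ) : ℂ) •
      Matrix.of (fun i j => atom Nx Ny (α k) (β k) i * star (atom Nx Ny (α k) (β k) j))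
    with hT_def
  have hToep : IsTwoLevelToeplitz T := by
    intro i j i' j' h1 h2
    have h1' : ((j.1 : ℕ) : ℝ) - ((i.1 : ℕ) : ℝ) = ((j'.1 : ℕ) : ℝ) - ((i'.1 : ℕ) : ℝ) := by
      have := congrArg (Int.cast : ℤ → ℝ) h1
      push_cast at this
      linarith
    have h2' : ((i.2 : ℕ) : ℝ) - ((j.2 : ℕ) : ℝ) = ((i'.2 : ℕ) : ℝ) - ((j'.2 : ℕ) : ℝ) := by
      have := congrArg (Int.cast : ℤ → ℝ) h2
      push_cast at this
      linarith
    simp only [hT_def, Matrix.sum_apply, Matrix.smul_apply, Matrix.of_apply]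
    refine Finset.sum_congr rfl fun k _ => ?_
    rw [atom_mul_star, atom_mul_star, h1', h2']
  -- PSD part
  have hc0 : (0:ℝ) < Real.sqrt s := Real.sqrt_pos.2 hs
  set c : ℝ := Real.sqrt s with hc_def
  have hcc : c * c = s := Real.mul_self_sqrt hs.le
  have hcC : (c:ℂ) ≠ 0 := by exact_mod_cast hc0.ne'
  set w : Fin K → (Unit ⊕ (Fin Nx × Fin Ny)) → ℂ :=
    fun k => Sum.elim (fun _ => (c:ℂ)) (fun i => atom Nx Ny (α k) (β k) i / c) with hw_def
  set A : Matrix (Fin K) (Unit ⊕ (Fin Nx × Fin Ny)) ℂ :=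
    Matrix.of (fun k x => ((Real.sqrt (p k) : ℝ) : ℂ) * star (w k x)) with hA_def
  have key : ∀ x y, (Aᴴ * A) x y = ∑ k, (p k : ℂ) * (w k x * star (w k y)) := by
    intro x y
    simp only [Matrix.mul_apply, Matrix.conjTranspose_apply, hA_def, Matrix.of_apply,
      star_mul', star_star, Complex.star_def, Complex.conj_ofReal, Complex.conj_conj]
    refine Finset.sum_congr rfl fun k _ => ?_
    rw [show ((Real.sqrt (p k) : ℝ) : ℂ) * w k x *
        (((Real.sqrt (p k) : ℝ) : ℂ) * (starRingEnd ℂ) (w k y)) =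
        ((Real.sqrt (p k) * Real.sqrt (p k) : ℝ) : ℂ) * (w k x * (starRingEnd ℂ) (w k y)) by
      push_cast; ring, Real.mul_self_sqrt (hp k).le]
  have hEq : blockMat t r T = Aᴴ * A := by
    ext x y
    rcases x with x | i <;> rcases y with y | j <;> rw [key]
    · -- (inl, inl)
      simp only [blockMat, Matrix.fromBlocks_apply₁₁, Matrix.of_apply, hw_def, Sum.elim_inl,
        Complex.star_def, Complex.conj_ofReal]
      have hcs : ((c:ℂ) * (c:ℂ)) = (s:ℂ) := by rw [← Complex.ofReal_mul, hcc]
      simp only [hcs]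
      push_cast [ht_def]
      rw [← Finset.sum_mul, mul_comm]
    · -- (inl, inr)
      simp only [blockMat, Matrix.fromBlocks_apply₁₂, Matrix.of_apply, hw_def, Sum.elim_inl,
        Sum.elim_inr]
      rw [hr]
      simp only [Finset.sum_apply, Pi.smul_apply, smul_eq_mul, star_sum, star_mul',
        Complex.star_def, Complex.conj_ofReal, star_div₀]
      refine Finset.sum_congr rfl fun k _ => ?_
      field_simp
    · -- (inr, inl)
      simp only [blockMat, Matrix.fromBlocks_apply₂₁, Matrix.of_apply, hw_def, Sum.elim_inl,
        Sum.elim_inr, Complex.star_def, Complex.conj_ofReal]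
      rw [hr]
      simp only [Finset.sum_apply, Pi.smul_apply, smul_eq_mul]
      refine Finset.sum_congr rfl fun k _ => ?_
      field_simp
    · -- (inr, inr)
      simp only [blockMat, Matrix.fromBlocks_apply₂₂, hT_def, Matrix.sum_apply,
        Matrix.smul_apply, Matrix.of_apply, smul_eq_mul, hw_def, Sum.elim_inr, star_div₀,
        Complex.star_def, Complex.conj_ofReal]
      refine Finset.sum_congr rfl fun k _ => ?_
      have h2 : ((c:ℂ) * (c:ℂ)) = (s:ℂ) := by rw [← Complex.ofReal_mul, hcc]
      rw [Complex.ofReal_div, div_mul_div_comm, h2]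
      ring
  have hPSD : (blockMat t r T).PosSemidef := by
    rw [hEq]; exact Matrix.posSemidef_conjTranspose_mul_self A
  -- trace
  have htr : Matrix.trace T = (((∑ k, p k) * s : ℝ) : ℂ) := by
    rw [hT_def, Matrix.trace_sum]
    simp only [Matrix.trace_smul, smul_eq_mul]
    have h1 : ∀ k : Fin K, Matrix.trace (Matrix.of fun i j =>
        atom Nx Ny (α k) (β k) i * star (atom Nx Ny (α k) (β k) j)) = (((Nx:ℝ) * Ny : ℝ) : ℂ) := by
      intro k
      rw [Matrix.trace]
      simp only [Matrix.diag_apply, Matrix.of_apply, atom_mul_star, sub_self, mul_zero,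
        add_zero, zero_add, Complex.ofReal_zero, zero_mul, Complex.exp_zero]
      simp [Finset.card_univ]
    have hterm : ∀ k : Fin K, ((p k / s : ℝ) : ℂ) * (((Nx:ℝ) * Ny : ℝ) : ℂ)
        = ((p k * s : ℝ) : ℂ) := by
      intro k
      rw [← Complex.ofReal_mul]
      congr 1
      rw [← hss]
      field_simp
    simp only [h1, hterm]
    push_cast
    rw [← Finset.sum_mul]
  refine le_trans (iInf_le _ t) ?_
  refine le_trans (iInf_le _ T) ?_
  refine le_trans (iInf_le _ hToep) ?_
  refine le_trans (iInf_le _ hPSD) ?_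
  apply le_of_eq
  rw [htr, Complex.ofReal_re, ← hs_def]
  congr 1
  rw [ht_def]
  field_simp
  ring
end
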